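/- Let K : S × S → ℝ be a bounded symmetric measurable kernel (not depending on its second measure argument), F a probability measure on S, and X_1,…,X_m independent random variables each distributed according to F, with empirical measure F̂_m. Then the risk of the empirical distribution function satisfies E[d_K(F, F̂_m)] = (1/m) · trace_F(K_{cen(F)}), where trace_F(K_{cen(F)}) = ∫ K_{cen(F)}(x,x) dF(x). -/

import Mathlib

open MeasureTheory ProbabilityTheory

/-- The quadratic distance d_K(F,G) = ∬ K(s,t) d(F−G)(s) d(F−G)(t), written as the
iterated integral of s ↦ ∫ K(s,t) d(F−G)(t) against the signed measure F−G. -/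
noncomputable def quadDist {S : Type*} [MeasurableSpace S] (K : S → S → ℝ)
    (F G : Measure S) : ℝ :=
  (∫ s, (∫ t, K s t ∂F - ∫ t, K s t ∂G) ∂F) - ∫ s, (∫ t, K s t ∂F - ∫ t, K s t ∂G) ∂G

/-- The G-centered kernel
K_{cen(G)}(x,y) = K(x,y) − K(x,G) − K(G,y) + K(G,G). -/
noncomputable def kcen {S : Type*} [MeasurableSpace S] (K : S → S → ℝ) (G : Measure S)
    (x y : S) : ℝ :=
  K x y - ∫ t, K x t ∂G - ∫ s, K s y ∂G + ∫ s, ∫ t, K s t ∂G ∂G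

/-- The empirical measure of x_1,…,x_m, assigning mass 1/m to each observation. -/
noncomputable def empiricalMeasure {S : Type*} [MeasurableSpace S] (m : ℕ)
    (x : Fin m → S) : Measure S :=
  ((m : ENNReal))⁻¹ • ∑ i, Measure.dirac (x i)

open Finset

/-!
Expanding the definitions, `d_K(F, F̂_m) = m⁻² ∑ᵢ ∑ⱼ K_{cen(F)}(Xᵢ, Xⱼ)`. By Fubini the centered
kernel integrates to zero against `F` in its second variable, so by independence every
off-diagonal term has mean zero, while each of the `m` diagonal terms has mean
`trace_F(K_{cen(F)})`.
-/

lemma integral_empiricalMeasure {S E : Type*} [MeasurableSpace S] [NormedAddCommGroup E]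
    [NormedSpace ℝ E] [CompleteSpace E] {m : ℕ} (x : Fin m → S) {f : S → E}
    (hf : StronglyMeasurable f) :
    ∫ s, f s ∂(empiricalMeasure m x) = (m : ℝ)⁻¹ • ∑ i, f (x i) := by
  have hint : ∀ i ∈ univ, Integrable f (Measure.dirac (x i)) := fun i _ =>
    integrable_dirac' hf enorm_lt_top
  rw [empiricalMeasure, integral_smul_measure, integral_finsetSum_measure hint]
  simp [integral_dirac' f _ hf, ENNReal.toReal_inv]

section BoundedFunction

variable {α : Type*} [MeasurableSpace α] {μ : Measure α} {f : α → ℝ} {C : ℝ}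

lemma integrable_of_abs_le [IsFiniteMeasure μ] (hf : Measurable f) (hC : ∀ x, |f x| ≤ C) :
    Integrable f μ :=
  .of_bound hf.aestronglyMeasurable C (ae_of_all _ fun x => (Real.norm_eq_abs _).trans_le (hC x))

lemma abs_integral_le_of_abs_le [IsProbabilityMeasure μ] (hC : ∀ x, |f x| ≤ C) :
    |∫ x, f x ∂μ| ≤ C := by
  simpa using norm_integral_le_of_norm_le_const (μ := μ)
    (ae_of_all _ fun x => (Real.norm_eq_abs _).trans_le (hC x))

end BoundedFunction

section BoundedKernel

variable {S : Type*} [MeasurableSpace S] {K : S → S → ℝ} {C : ℝ} (F : Measure S)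

lemma measurable_uncurry_kcen [SFinite F] (hK : Measurable (Function.uncurry K)) :
    Measurable (Function.uncurry (kcen K F)) := by
  have hright : Measurable fun x => ∫ t, K x t ∂F :=
    (hK.stronglyMeasurable.integral_prod_right (ν := F)).measurable
  have hleft : Measurable fun y => ∫ s, K s y ∂F :=
    (hK.stronglyMeasurable.integral_prod_left (μ := F)).measurable
  exact ((hK.sub (hright.comp measurable_fst)).sub (hleft.comp measurable_snd)).add_const _

variable [IsProbabilityMeasure F]

lemma abs_kcen_le (hC : ∀ x y, |K x y| ≤ C) (x y : S) : |kcen K F x y| ≤ 4 * C := by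
  have h₁ := abs_integral_le_of_abs_le (μ := F) (hC x)
  have h₂ := abs_integral_le_of_abs_le (μ := F) (hC · y)
  have h₃ := abs_integral_le_of_abs_le (μ := F) fun s =>
    abs_integral_le_of_abs_le (μ := F) (hC s)
  have h₀ := hC x y
  unfold kcen
  rw [abs_le] at h₀ h₁ h₂ h₃ ⊢
  constructor <;> linarith

lemma integral_kcen_right (hK : Measurable (Function.uncurry K)) (hC : ∀ x y, |K x y| ≤ C)
    (x : S) : ∫ y, kcen K F x y ∂F = 0 := by
  have hK₂ : Integrable (Function.uncurry K) (F.prod F) :=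
    integrable_of_abs_le hK fun p => hC p.1 p.2
  have hright : Integrable (fun s => ∫ t, K s t ∂F) F :=
    integrable_of_abs_le (hK.stronglyMeasurable.integral_prod_right (ν := F)).measurable
      fun s => abs_integral_le_of_abs_le (hC s)
  have hleft : Integrable (fun y => ∫ s, K s y ∂F) F :=
    integrable_of_abs_le (hK.stronglyMeasurable.integral_prod_left (μ := F)).measurable
      fun y => abs_integral_le_of_abs_le (hC · y)
  have hsection : Integrable (K x) F := integrable_of_abs_le hK.of_uncurry_left (hC x)
  unfold kcen
  rw [integral_add _ (integrable_const _), integral_sub _ hleft,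
    integral_sub hsection (integrable_const _), integral_integral_swap hK₂]
  · simp
  · exact hsection.sub (integrable_const _)
  · exact (hsection.sub (integrable_const _)).sub hleft

theorem quadDist_empiricalMeasure (hK : Measurable (Function.uncurry K))
    (hC : ∀ x y, |K x y| ≤ C) {m : ℕ} (hm : 0 < m) (x : Fin m → S) :
    quadDist K F (empiricalMeasure m x) = ((m : ℝ) ^ 2)⁻¹ * ∑ i, ∑ j, kcen K F (x i) (x j) := by
  have hright : StronglyMeasurable fun s => ∫ t, K s t ∂F :=
    hK.stronglyMeasurable.integral_prod_right
  have hempirical : ∀ s, ∫ t, K s t ∂(empiricalMeasure m x) = (m : ℝ)⁻¹ * ∑ i, K s (x i) :=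
    fun s => integral_empiricalMeasure x hK.of_uncurry_left.stronglyMeasurable
  have hmean : Integrable (fun s => (m : ℝ)⁻¹ * ∑ i, K s (x i)) F :=
    (integrable_finsetSum _ fun i _ =>
      integrable_of_abs_le hK.of_uncurry_right (hC · (x i))).const_mul _
  have hF : ∫ s, (∫ t, K s t ∂F - (m : ℝ)⁻¹ * ∑ i, K s (x i)) ∂F
      = ∫ s, ∫ t, K s t ∂F ∂F - (m : ℝ)⁻¹ * ∑ i, ∫ s, K s (x i) ∂F := by
    rw [integral_sub (integrable_of_abs_le hright.measurable
      fun s => abs_integral_le_of_abs_le (hC s)) hmean, integral_const_mul,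
      integral_finsetSum _ fun i _ => integrable_of_abs_le hK.of_uncurry_right (hC · (x i))]
  have hG : ∫ s, (∫ t, K s t ∂F - (m : ℝ)⁻¹ * ∑ i, K s (x i)) ∂(empiricalMeasure m x)
      = (m : ℝ)⁻¹ * ∑ j, (∫ t, K (x j) t ∂F - (m : ℝ)⁻¹ * ∑ i, K (x j) (x i)) :=
    integral_empiricalMeasure x (hright.sub ((stronglyMeasurable_fun_sum _ fun i _ =>
      hK.of_uncurry_right.stronglyMeasurable).const_mul _))
  have hm' : (m : ℝ) ≠ 0 := by positivity
  rw [quadDist]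
  simp_rw [hempirical]
  rw [hF, hG]
  simp only [kcen, sum_add_distrib, sum_sub_distrib, sum_const, card_univ, Fintype.card_fin,
    nsmul_eq_mul, ← mul_sum]
  field_simp
  ring

end BoundedKernel

lemma IndepFun.integral_comp_eq_integral_integral {Ω S T E : Type*} [MeasurableSpace Ω]
    [MeasurableSpace S] [MeasurableSpace T] [NormedAddCommGroup E] [NormedSpace ℝ E]
    {P : Measure Ω} [IsFiniteMeasure P] {X : Ω → S} {Y : Ω → T} (hXY : IndepFun X Y P)
    (hX : AEMeasurable X P) (hY : AEMeasurable Y P) {H : S → T → E}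
    (hH : Integrable (Function.uncurry H) ((P.map X).prod (P.map Y))) :
    ∫ ω, H (X ω) (Y ω) ∂P = ∫ x, ∫ y, H x y ∂(P.map Y) ∂(P.map X) := by
  have hmap : P.map (fun ω => (X ω, Y ω)) = (P.map X).prod (P.map Y) :=
    (indepFun_iff_map_prod_eq_prod_map_map hX hY).mp hXY
  calc ∫ ω, H (X ω) (Y ω) ∂P = ∫ p, Function.uncurry H p ∂(P.map fun ω => (X ω, Y ω)) :=
        (integral_map (hX.prodMk hY) (hmap ▸ hH.aestronglyMeasurable)).symm
    _ = ∫ x, ∫ y, H x y ∂(P.map Y) ∂(P.map X) := by rw [hmap, integral_prod _ hH]; rfl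

lemma integral_sum_sum_eq_card_mul_integral_diag {Ω S ι : Type*} [MeasurableSpace Ω]
    [MeasurableSpace S] [Fintype ι] {P : Measure Ω} [IsProbabilityMeasure P]
    {F : Measure S} [IsProbabilityMeasure F] {H : S → S → ℝ} {C : ℝ}
    (hH : Measurable (Function.uncurry H)) (hC : ∀ x y, |H x y| ≤ C)
    (hH0 : ∀ x, ∫ y, H x y ∂F = 0) {X : ι → Ω → S} (hXmeas : ∀ i, Measurable (X i))
    (hXindep : Pairwise fun i j => IndepFun (X i) (X j) P) (hXdist : ∀ i, P.map (X i) = F) :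
    ∫ ω, ∑ i, ∑ j, H (X i ω) (X j ω) ∂P = Fintype.card ι * ∫ x, H x x ∂F := by
  classical
  have hint : ∀ i j, Integrable (fun ω => H (X i ω) (X j ω)) P := fun i j =>
    integrable_of_abs_le (hH.comp ((hXmeas i).prodMk (hXmeas j))) fun _ => hC _ _
  have hterm : ∀ i j, ∫ ω, H (X i ω) (X j ω) ∂P = if i = j then ∫ x, H x x ∂F else 0 := by
    intro i j
    rcases eq_or_ne i j with rfl | hij
    · have hdiag : Measurable fun x => H x x := hH.comp (measurable_id.prodMk measurable_id)
      rw [if_pos rfl, ← hXdist i]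
      exact (integral_map (hXmeas i).aemeasurable hdiag.aestronglyMeasurable).symm
    · rw [if_neg hij, IndepFun.integral_comp_eq_integral_integral (hXindep hij)
        (hXmeas i).aemeasurable (hXmeas j).aemeasurable, hXdist, hXdist]
      · simp [hH0]
      · rw [hXdist, hXdist]
        exact integrable_of_abs_le hH fun p => hC p.1 p.2
  rw [integral_finsetSum _ fun i _ => integrable_finsetSum _ fun j _ => hint i j]
  simp_rw [integral_finsetSum _ fun j _ => hint _ j, hterm]
  simp

theorem empirical_risk_general {S Ω : Type*} [MeasurableSpace S] [MeasurableSpace Ω]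
    (P : Measure Ω) [IsProbabilityMeasure P]
    (F : Measure S) [IsProbabilityMeasure F]
    (K : S → S → ℝ)
    (hKmeas : Measurable (Function.uncurry K))
    (hKbdd : ∃ C : ℝ, ∀ x y, |K x y| ≤ C)
    (m : ℕ) (hm : 0 < m) (X : Fin m → Ω → S)
    (hXmeas : ∀ i, Measurable (X i))
    (hXindep : iIndepFun X P)
    (hXdist : ∀ i, Measure.map (X i) P = F) :
    ∫ ω, quadDist K F (empiricalMeasure m (fun i => X i ω)) ∂P
      = (1 / (m : ℝ)) * ∫ x, kcen K F x x ∂F := by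
  obtain ⟨C, hC⟩ := hKbdd
  calc ∫ ω, quadDist K F (empiricalMeasure m (fun i => X i ω)) ∂P
      = ((m : ℝ) ^ 2)⁻¹ * ∫ ω, ∑ i, ∑ j, kcen K F (X i ω) (X j ω) ∂P := by
        simp_rw [quadDist_empiricalMeasure F hKmeas hC hm]
        exact integral_const_mul _ _
    _ = ((m : ℝ) ^ 2)⁻¹ * (m * ∫ x, kcen K F x x ∂F) := by
        rw [integral_sum_sum_eq_card_mul_integral_diag (measurable_uncurry_kcen F hKmeas)
          (abs_kcen_le F hC) (integral_kcen_right F hKmeas hC) hXmeas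
          (fun i j hij => hXindep.indepFun hij) hXdist, Fintype.card_fin]
    _ = (1 / (m : ℝ)) * ∫ x, kcen K F x x ∂F := by
        field_simp

/-- for X_1,…,X_m i.i.d. with law F and F̂_m the empirical measure,
E[d_K(F, F̂_m)] = (1/m) · trace_F(K_{cen(F)}), where
trace_F(K_{cen(F)}) = ∫ K_{cen(F)}(x,x) dF(x). -/
theorem empirical_risk {S Ω : Type*} [MeasurableSpace S] [MeasurableSpace Ω]
    (P : Measure Ω) [IsProbabilityMeasure P]
    (F : Measure S) [IsProbabilityMeasure F]
    (K : S → S → ℝ)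
    (hKmeas : Measurable (Function.uncurry K))
    (hKbdd : ∃ C : ℝ, ∀ x y, |K x y| ≤ C)
    (hKsymm : ∀ x y, K x y = K y x)
    (m : ℕ) (hm : 0 < m) (X : Fin m → Ω → S)
    (hXmeas : ∀ i, Measurable (X i))
    (hXindep : iIndepFun X P)
    (hXdist : ∀ i, Measure.map (X i) P = F) :
    ∫ ω, quadDist K F (empiricalMeasure m (fun i => X i ω)) ∂P
      = (1 / (m : ℝ)) * ∫ x, kcen K F x x ∂F :=
  empirical_risk_general P F K hKmeas hKbdd m hm X hXmeas hXindep hXdist
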